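/- arXiv:2509.24158 — 2 statements merged into one kernel-verified Lean document; each statement's English description precedes it below -/
import Mathlib

section
/- Let Q be a finite collection of subsets of M with M ∈ Q and all π_t > 0, λ_s = ∑_{t∈Q, t⊇s} π_t. Fix r ∈ Q, r ≠ M, and define the RAY random variable ω_r(R) = ∑_{s ⊇ r}(-1)^{|s|-|r|} 𝟙(R ⊇ s)/λ_s. Then ω_r can be rewritten as ω_r = ∑_{s ∈ Q, s ⊇ r} (𝟙(R = s)/π_s) · α_{r,s} with coefficients α_{r,s} = π_s · ∑_{t : r ⊆ t ⊆ s} (-1)^{|t|-|r|}/λ_t, and these coefficients satisfy the constraint ∑_{s ∈ Q, s ⊇ r} α_{r,s} = 0. -/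
/-!
For `R ⊇ r` the RAY variable `ω_r(R)` is the sum of the weights `(-1)^{|t|-|r|}/λ_t` over the
interval `[r, R]`, which is `α_{r,R}/π_R` by the very definition of `α`. For the constraint,
exchange the order of summation in `∑_s α_{r,s}`: each `t ∈ [r, M]` collects
`∑_{s ∈ Q, s ⊇ t} π_s = λ_t`, which cancels its denominator, and what is left is the alternating
sum `∑_{t ∈ [r, M]} (-1)^{|t|-|r|}`, i.e. the Möbius function of the Boolean lattice, which
vanishes for `r ≠ M`.
-/

open Finset

namespace Finset

section LocallyFiniteOrder

variable {α β : Type*} [Preorder α] [LocallyFiniteOrder α] [DecidableLE α]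

theorem sum_Icc_ite_le_of_le [AddCommMonoid β] {a b c : α} (hbc : b ≤ c) (f : α → β) :
    ∑ x ∈ Icc a c, (if x ≤ b then f x else 0) = ∑ x ∈ Icc a b, f x := by
  rw [← sum_filter]
  congr 1
  ext x
  simp only [mem_filter, mem_Icc]
  exact ⟨fun ⟨⟨hax, _⟩, hxb⟩ => ⟨hax, hxb⟩, fun ⟨hax, hxb⟩ => ⟨⟨hax, hxb.trans hbc⟩, hxb⟩⟩

theorem sum_filter_mul_sum_Icc_comm [CommSemiring β] {Q : Finset α} {M : α}
    (hQ : ∀ s ∈ Q, s ≤ M) (r : α) (π f : α → β) :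
    ∑ s ∈ Q with r ≤ s, π s * ∑ t ∈ Icc r s, f t
      = ∑ t ∈ Icc r M, f t * ∑ s ∈ Q with t ≤ s, π s := by
  have hmem : ∀ s t, s ∈ Q.filter (r ≤ ·) ∧ t ∈ Icc r s ↔ s ∈ Q.filter (t ≤ ·) ∧ t ∈ Icc r M := by
    simp only [mem_filter, mem_Icc]
    intro s t
    constructor
    · rintro ⟨⟨hsQ, -⟩, hrt, hts⟩
      exact ⟨⟨hsQ, hts⟩, hrt, hts.trans (hQ s hsQ)⟩
    · rintro ⟨⟨hsQ, hts⟩, hrt, -⟩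
      exact ⟨⟨hsQ, hrt.trans hts⟩, hrt, hts⟩
  simp only [mul_sum, sum_mul, mul_comm (f _)]
  exact sum_comm' hmem

end LocallyFiniteOrder

theorem sum_Icc_neg_one_pow_card_sub {α β : Type*} [DecidableEq α] [Ring β]
    (r M : Finset α) :
    ∑ t ∈ Icc r M, (-1 : β) ^ (#t - #r) = if r = M then 1 else 0 := by
  by_cases hrM : r ⊆ M
  · have hdisj : ∀ u ∈ (M \ r).powerset, Disjoint r u := fun u hu =>
      disjoint_of_subset_right (mem_powerset.1 hu) disjoint_sdiff
    have hinj : Set.InjOn (r ∪ ·) (M \ r).powerset := fun u hu v hv (huv : r ∪ u = r ∪ v) => by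
      rw [← union_sdiff_cancel_left (hdisj u hu), huv, union_sdiff_cancel_left (hdisj v hv)]
    rw [Icc_eq_image_powerset hrM, sum_image hinj]
    calc ∑ u ∈ (M \ r).powerset, (-1 : β) ^ (#(r ∪ u) - #r)
        = ∑ u ∈ (M \ r).powerset, (-1 : β) ^ #u := sum_congr rfl fun u hu => by
          rw [card_union_of_disjoint (hdisj u hu), Nat.add_sub_cancel_left]
      _ = ((∑ u ∈ (M \ r).powerset, (-1 : ℤ) ^ #u : ℤ) : β) := by push_cast; rfl
      _ = if r = M then 1 else 0 := by
          have hempty : M \ r = ∅ ↔ r = M :=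
            sdiff_eq_empty_iff_subset.trans ⟨hrM.antisymm, fun h => h ▸ subset_rfl⟩
          rw [sum_powerset_neg_one_pow_card]
          push_cast [hempty]
          rfl
  · rw [Icc_eq_empty hrM, sum_empty, if_neg (fun h => hrM h.le)]

end Finset

theorem ray_in_adaptive_class_general {α : Type*} [DecidableEq α]
    (M : Finset α) (Q : Finset (Finset α))
    (hQsub : ∀ t ∈ Q, t ⊆ M)
    (π : Finset α → ℝ) (hpos : ∀ t ∈ Q, 0 < π t)
    (lam : Finset α → ℝ)
    (hlam : ∀ s, lam s = ∑ t ∈ Q.filter (fun t => s ⊆ t), π t)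
    (hlampos : ∀ s ⊆ M, 0 < lam s)
    (r : Finset α) (hrM : r ≠ M)
    (w : Finset α → ℝ)
    (hw : ∀ R, w R = ∑ s ∈ M.powerset.filter (fun s => r ⊆ s),
      (-1 : ℝ) ^ (s.card - r.card) * (if s ⊆ R then (1 : ℝ) else 0) / lam s)
    (c : Finset α → ℝ)
    (hc : ∀ s, c s = π s * ∑ t ∈ s.powerset.filter (fun t => r ⊆ t),
      (-1 : ℝ) ^ (t.card - r.card) / lam t) :
    (∀ R ∈ Q, w R = ∑ s ∈ Q.filter (fun s => r ⊆ s),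
      (if R = s then 1 / π s else 0) * c s) ∧
    (∑ s ∈ Q.filter (fun s => r ⊆ s), c s = 0) := by
  set g : Finset α → ℝ := fun t => (-1 : ℝ) ^ (#t - #r) / lam t
  simp only [← Icc_eq_filter_powerset] at hw hc
  constructor
  · intro R hR
    calc w R = ∑ s ∈ Icc r M, if s ⊆ R then g s else 0 := by
          simp only [hw, mul_ite, mul_one, mul_zero, ite_div, zero_div]; rfl
      _ = ∑ s ∈ Icc r R, g s := sum_Icc_ite_le_of_le (hQsub R hR) g
      _ = _ := by
          simp only [ite_mul, zero_mul, sum_ite_eq, mem_filter, hR, true_and, hc]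
          split_ifs with hrR
          · rw [one_div, inv_mul_cancel_left₀ (hpos R hR).ne']
          · rw [Icc_eq_empty hrR, sum_empty]
  · calc ∑ s ∈ Q.filter (fun s => r ⊆ s), c s
        = ∑ s ∈ Q.filter (fun s => r ⊆ s), π s * ∑ t ∈ Icc r s, g t :=
          sum_congr rfl fun s _ => hc s
      _ = ∑ t ∈ Icc r M, g t * lam t := by rw [sum_filter_mul_sum_Icc_comm hQsub]; simp only [hlam]
      _ = ∑ t ∈ Icc r M, (-1 : ℝ) ^ (#t - #r) :=
          sum_congr rfl fun t ht => div_mul_cancel₀ _ (hlampos t (mem_Icc.1 ht).2).ne'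
      _ = 0 := by rw [sum_Icc_neg_one_pow_card_sub, if_neg hrM]

/-- IBM(RAY) belongs to the adaptive class: the RAY random variable
`ω_r(R) = ∑_{s ⊇ r} (-1)^{|s|-|r|} 𝟙(s ⊆ R)/λ_s` can be rewritten as
`∑_{s ∈ Q, s ⊇ r} (𝟙(R = s)/π_s)·α_{r,s}` with
`α_{r,s} = π_s ∑_{t : r ⊆ t ⊆ s} (-1)^{|t|-|r|}/λ_t`, and these coefficients
satisfy the constraint `∑_{s ∈ Q, s ⊇ r} α_{r,s} = 0`. -/
theorem ray_in_adaptive_class {α : Type*} [DecidableEq α]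
    (M : Finset α) (Q : Finset (Finset α)) (hQM : M ∈ Q)
    (hQsub : ∀ t ∈ Q, t ⊆ M)
    (π : Finset α → ℝ) (hpos : ∀ t ∈ Q, 0 < π t)
    (lam : Finset α → ℝ)
    (hlam : ∀ s, lam s = ∑ t ∈ Q.filter (fun t => s ⊆ t), π t)
    (hlampos : ∀ s ⊆ M, 0 < lam s)
    (r : Finset α) (hr : r ∈ Q) (hrM : r ≠ M)
    (w : Finset α → ℝ)
    (hw : ∀ R, w R = ∑ s ∈ M.powerset.filter (fun s => r ⊆ s),
      (-1 : ℝ) ^ (s.card - r.card) * (if s ⊆ R then (1 : ℝ) else 0) / lam s)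
    (c : Finset α → ℝ)
    (hc : ∀ s, c s = π s * ∑ t ∈ s.powerset.filter (fun t => r ⊆ t),
      (-1 : ℝ) ^ (t.card - r.card) / lam t) :
    (∀ R ∈ Q, w R = ∑ s ∈ Q.filter (fun s => r ⊆ s),
      (if R = s then 1 / π s else 0) * c s) ∧
    (∑ s ∈ Q.filter (fun s => r ⊆ s), c s = 0) :=
  ray_in_adaptive_class_general M Q hQsub π hpos lam hlam hlampos r hrM w hw c hc
end

section
/- Let ψ, f₁, …, f_k be square-integrable centered ℝ-valued random variables and R an independent pattern variable with values in finite Q and full pattern M, π_t > 0. For coefficients satisfying ∑_{s⊇r} α_{r,s} = 0, the variance of the adaptive estimating function Ψ = (𝟙(R=M)/π_M)ψ + ∑_{r≠M}(∑_{s⊇r}(𝟙(R=s)/π_s)α_{r,s})f_r decomposes as Var(Ψ) = Var(ψ)/π_M + ∑_{r≠M}(2α_{r,M}/π_M)Cov(ψ, f_r) + ∑_{s∈Q, s≠M}(1/π_s)Var(∑_{r⊆s, r≠M} α_{r,s} f_r) + (1/π_M)Var(∑_{r≠M} α_{r,M} f_r). -/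
/-! Write `Ψ(ω, t) = ∑_{s ∈ Q} g_s(ω) 𝟙(t = s) / π_s` with the pattern
components `g_M = ψ + ∑_{r ≠ M} α_{r,M} f_r` and `g_s = ∑_{r ⊆ s, r ≠ M} α_{r,s} f_r`
(`adaptiveComponent`). The indicators of distinct patterns are disjoint, so
`Ψ² = ∑_s g_s² 𝟙(t = s) / π_s²`, and on the product measure `E[g_s(ω) 𝟙(R = s)] = π_s E[g_s]`.
As every `g_s` is centred, `E Ψ = 0` and `Var Ψ = ∑_s Var(g_s) / π_s`; expanding `Var(g_M)`
produces the variance of `ψ`, the covariance terms and the last term. -/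

open MeasureTheory Finset

/-- Variance of a real-valued functional. -/
noncomputable def rvVar {Ω : Type*} [MeasurableSpace Ω] (μ : Measure Ω)
    (g : Ω → ℝ) : ℝ :=
  (∫ x, g x ^ 2 ∂μ) - (∫ x, g x ∂μ) ^ 2

/-- Covariance of two real-valued functionals. -/
noncomputable def rvCov {Ω : Type*} [MeasurableSpace Ω] (μ : Measure Ω)
    (g h : Ω → ℝ) : ℝ :=
  (∫ x, g x * h x ∂μ) - (∫ x, g x ∂μ) * (∫ x, h x ∂μ)

open ProbabilityTheory

section Moments

variable {Ω : Type*} [MeasurableSpace Ω] {μ : Measure Ω}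

lemma rvVar_of_integral_eq_zero {g : Ω → ℝ} (hg : ∫ x, g x ∂μ = 0) :
    rvVar μ g = ∫ x, g x ^ 2 ∂μ := by
  simp [rvVar, hg]

variable [IsProbabilityMeasure μ]

lemma rvVar_eq_variance {g : Ω → ℝ} (hg : MemLp g 2 μ) : rvVar μ g = Var[g; μ] := by
  rw [variance_eq_sub hg]
  rfl

lemma rvCov_eq_covariance {g h : Ω → ℝ} (hg : MemLp g 2 μ) (hh : MemLp h 2 μ) :
    rvCov μ g h = cov[g, h; μ] := by
  rw [covariance_eq_sub hg hh]
  rfl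

lemma rvVar_add_sum_const_mul {ι : Type*} {A : Finset ι} {ψ : Ω → ℝ} {f : ι → Ω → ℝ}
    (hψ : MemLp ψ 2 μ) (hf : ∀ r ∈ A, MemLp (f r) 2 μ) (c : ι → ℝ) :
    rvVar μ (fun x => ψ x + ∑ r ∈ A, c r * f r x)
      = rvVar μ ψ + 2 * ∑ r ∈ A, c r * rvCov μ ψ (f r)
        + rvVar μ (fun x => ∑ r ∈ A, c r * f r x) := by
  have hcf : ∀ r ∈ A, MemLp (fun x => c r * f r x) 2 μ := fun r hr => (hf r hr).const_mul _
  have hsum : MemLp (fun x => ∑ r ∈ A, c r * f r x) 2 μ := memLp_finsetSum A hcf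
  rw [rvVar_eq_variance (g := fun x => ψ x + _) (hψ.add hsum), rvVar_eq_variance hψ,
    rvVar_eq_variance hsum, variance_fun_add hψ hsum, covariance_fun_sum_right' hcf hψ,
    sum_congr rfl fun r hr => by
    rw [covariance_const_mul_right, ← rvCov_eq_covariance hψ (hf r hr)]]

end Moments

lemma sq_sum_mul_ite_eq {ι R : Type*} [DecidableEq ι] [CommSemiring R] (Q : Finset ι) (t : ι)
    (G c : ι → R) :
    (∑ s ∈ Q, G s * (if t = s then c s else 0)) ^ 2
      = ∑ s ∈ Q, G s ^ 2 * (if t = s then c s ^ 2 else 0) := by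
  simp only [mul_ite, mul_zero, sum_ite_eq]
  split_ifs <;> ring

section Pattern

variable {T : Type*} [MeasurableSpace T] [MeasurableSingletonClass T] [DecidableEq T]
  (ν : Measure T)

omit [MeasurableSpace T] [MeasurableSingletonClass T] in
lemma ite_eq_indicator_singleton (s : T) (c : ℝ) :
    (fun t => if t = s then c else 0) = Set.indicator {s} (fun _ => c) := by
  ext t
  simp only [Set.indicator_apply, Set.mem_singleton_iff]

lemma integrable_ite_eq [IsFiniteMeasure ν] (s : T) (c : ℝ) :
    Integrable (fun t => if t = s then c else 0) ν := by
  rw [ite_eq_indicator_singleton]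
  exact (integrable_const c).indicator (measurableSet_singleton s)

lemma integral_ite_eq (s : T) (c : ℝ) :
    ∫ t, (if t = s then c else 0) ∂ν = ν.real {s} * c := by
  rw [ite_eq_indicator_singleton, integral_indicator_const c (measurableSet_singleton s),
    smul_eq_mul]

variable {Ω : Type*} [MeasurableSpace Ω] (μ : Measure Ω) [IsFiniteMeasure μ]
  [IsFiniteMeasure ν]

lemma integral_prod_sum_mul_ite (Q : Finset T) {G : T → Ω → ℝ}
    (hG : ∀ s ∈ Q, Integrable (G s) μ) (c : T → ℝ) :
    ∫ p, ∑ s ∈ Q, G s p.1 * (if p.2 = s then c s else 0) ∂(μ.prod ν)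
      = ∑ s ∈ Q, ν.real {s} * c s * ∫ x, G s x ∂μ := by
  rw [integral_finsetSum _ fun s hs => (hG s hs).mul_prod (integrable_ite_eq ν s (c s))]
  refine sum_congr rfl fun s _ => ?_
  rw [integral_prod_mul (G s) (fun t => if t = s then c s else 0), integral_ite_eq, mul_comm]

lemma rvVar_prod_sum_mul_ite_one_div (Q : Finset T) (π : T → ℝ)
    (hπ : ∀ s ∈ Q, π s = ν.real {s}) {G : T → Ω → ℝ}
    (hG2 : ∀ s ∈ Q, MemLp (G s) 2 μ) (hG0 : ∀ s ∈ Q, ∫ x, G s x ∂μ = 0) :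
    rvVar (μ.prod ν) (fun p => ∑ s ∈ Q, G s p.1 * (if p.2 = s then 1 / π s else 0))
      = ∑ s ∈ Q, 1 / π s * rvVar μ (G s) := by
  have hmean : ∫ p, ∑ s ∈ Q, G s p.1 * (if p.2 = s then 1 / π s else 0) ∂(μ.prod ν) = 0 := by
    rw [integral_prod_sum_mul_ite ν μ Q fun s hs => (hG2 s hs).integrable one_le_two]
    exact sum_eq_zero fun s hs => by rw [hG0 s hs, mul_zero]
  rw [rvVar, hmean]
  simp only [sq_sum_mul_ite_eq,
    integral_prod_sum_mul_ite ν μ Q fun s hs => (hG2 s hs).integrable_sq]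
  rw [zero_pow two_ne_zero, sub_zero]
  refine sum_congr rfl fun s hs => ?_
  rw [rvVar_of_integral_eq_zero (hG0 s hs), ← hπ s hs]
  grind

end Pattern

lemma sum_sum_filter_mul_comm {ι κ R : Type*} [CommSemiring R] (A : Finset ι) (B : Finset κ)
    (p : ι → κ → Prop) [∀ r s, Decidable (p r s)] (c : κ → R) (a : ι → κ → R) (f : ι → R) :
    ∑ r ∈ A, (∑ s ∈ B.filter (fun s => p r s), c s * a r s) * f r
      = ∑ s ∈ B, (∑ r ∈ A.filter (fun r => p r s), a r s * f r) * c s := by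
  simp only [sum_filter, sum_mul]
  rw [sum_comm]
  refine sum_congr rfl fun s _ => sum_congr rfl fun r _ => ?_
  split_ifs <;> ring

section AdaptiveComponent

variable {Ω β : Type*} [DecidableEq β] (Q : Finset (Finset β)) (M : Finset β) (ψ : Ω → ℝ)
  (f : Finset β → Ω → ℝ) (a : Finset β → Finset β → ℝ)

def adaptiveComponent (s : Finset β) (x : Ω) : ℝ :=
  (if s = M then ψ x else 0) + ∑ r ∈ (Q.erase M).filter (fun r => r ⊆ s), a r s * f r x

lemma adaptiveComponent_of_ne {s : Finset β} (hs : s ≠ M) :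
    adaptiveComponent Q M ψ f a s
      = fun x => ∑ r ∈ (Q.erase M).filter (fun r => r ⊆ s), a r s * f r x := by
  ext x
  rw [adaptiveComponent, if_neg hs, zero_add]

lemma adaptiveComponent_self (hQsub : ∀ t ∈ Q, t ⊆ M) :
    adaptiveComponent Q M ψ f a M = fun x => ψ x + ∑ r ∈ Q.erase M, a r M * f r x := by
  ext x
  rw [adaptiveComponent, if_pos rfl,
    filter_true_of_mem fun r hr => hQsub r (mem_of_mem_erase hr)]

lemma sum_adaptiveComponent_mul (hM : M ∈ Q) (c : Finset β → ℝ) (x : Ω) :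
    ∑ s ∈ Q, adaptiveComponent Q M ψ f a s x * c s
      = c M * ψ x
        + ∑ r ∈ Q.erase M, (∑ s ∈ Q.filter (fun s => r ⊆ s), c s * a r s) * f r x := by
  simp only [adaptiveComponent, add_mul, sum_add_distrib, ite_mul, zero_mul, sum_ite_eq',
    if_pos hM, sum_sum_filter_mul_comm, mul_comm (ψ x)]

variable [MeasurableSpace Ω] {μ : Measure Ω}

lemma memLp_adaptiveComponent (hψ2 : MemLp ψ 2 μ) (hf2 : ∀ r ∈ Q.erase M, MemLp (f r) 2 μ)
    (s : Finset β) : MemLp (adaptiveComponent Q M ψ f a s) 2 μ := by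
  refine MemLp.add ?_ (memLp_finsetSum _ fun r hr => (hf2 r (mem_filter.1 hr).1).const_mul _)
  by_cases hs : s = M <;> simp [hs, hψ2]

lemma integral_adaptiveComponent [IsFiniteMeasure μ] (hψ2 : MemLp ψ 2 μ)
    (hψ0 : ∫ x, ψ x ∂μ = 0) (hf2 : ∀ r ∈ Q.erase M, MemLp (f r) 2 μ)
    (hf0 : ∀ r ∈ Q.erase M, ∫ x, f r x ∂μ = 0)
    (s : Finset β) : ∫ x, adaptiveComponent Q M ψ f a s x ∂μ = 0 := by
  have hterm : ∀ r ∈ (Q.erase M).filter (fun r => r ⊆ s),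
      Integrable (fun x => a r s * f r x) μ :=
    fun r hr => ((hf2 r (mem_filter.1 hr).1).integrable one_le_two).const_mul _
  have hsum : ∫ x, ∑ r ∈ (Q.erase M).filter (fun r => r ⊆ s), a r s * f r x ∂μ = 0 := by
    rw [integral_finsetSum _ hterm]
    exact sum_eq_zero fun r hr => by
      rw [integral_const_mul, hf0 r (mem_filter.1 hr).1, mul_zero]
  by_cases hs : s = M
  · simp only [adaptiveComponent, if_pos hs]
    rw [integral_add (hψ2.integrable one_le_two) (integrable_finsetSum _ hterm), hψ0, hsum,
      zero_add]
  · simpa only [adaptiveComponent, if_neg hs, zero_add] using hsum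

end AdaptiveComponent

theorem ibm_adaptive_variance_decomposition_general
    {Ω : Type*} [MeasurableSpace Ω] (μ : Measure Ω) [IsProbabilityMeasure μ]
    {β : Type*} [DecidableEq β] [MeasurableSpace (Finset β)]
    [MeasurableSingletonClass (Finset β)]
    (ν : Measure (Finset β)) [IsProbabilityMeasure ν]
    (Q : Finset (Finset β)) (M : Finset β) (hM : M ∈ Q)
    (hQsub : ∀ t ∈ Q, t ⊆ M)
    (π : Finset β → ℝ) (hπ : ∀ t ∈ Q, π t = (ν {t}).toReal)
    (ψ : Ω → ℝ) (hψ2 : MemLp ψ 2 μ) (hψ0 : ∫ z, ψ z ∂μ = 0)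
    (f : Finset β → Ω → ℝ) (hf2 : ∀ r ∈ Q.erase M, MemLp (f r) 2 μ)
    (hf0 : ∀ r ∈ Q.erase M, ∫ z, f r z ∂μ = 0)
    (a : Finset β → Finset β → ℝ) :
    rvVar (μ.prod ν)
      (fun p =>
        (if p.2 = M then 1 / π M else 0) * ψ p.1 +
        ∑ r ∈ Q.erase M,
          (∑ s ∈ Q.filter (fun s => r ⊆ s),
            (if p.2 = s then 1 / π s else 0) * a r s) * f r p.1)
      = rvVar μ ψ / π M
        + ∑ r ∈ Q.erase M, (2 * a r M / π M) * rvCov μ ψ (f r)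
        + ∑ s ∈ Q.erase M, (1 / π s) *
            rvVar μ (fun x => ∑ r ∈ (Q.erase M).filter (fun r => r ⊆ s), a r s * f r x)
        + (1 / π M) * rvVar μ (fun x => ∑ r ∈ Q.erase M, a r M * f r x) := by
  refine (congrArg (rvVar (μ.prod ν)) (funext fun p => (sum_adaptiveComponent_mul Q M ψ f a hM
    (fun s => if p.2 = s then 1 / π s else 0) p.1).symm)).trans ?_
  rw [rvVar_prod_sum_mul_ite_one_div ν μ Q π hπ
      (fun s _ => memLp_adaptiveComponent Q M ψ f a hψ2 hf2 s)
      (fun s _ => integral_adaptiveComponent Q M ψ f a hψ2 hψ0 hf2 hf0 s),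
    ← add_sum_erase Q _ hM, adaptiveComponent_self Q M ψ f a hQsub,
    rvVar_add_sum_const_mul hψ2 hf2, sum_congr rfl fun s hs => congrArg (1 / π s * rvVar μ ·)
      (adaptiveComponent_of_ne Q M ψ f a (ne_of_mem_erase hs))]
  have hcov : ∑ r ∈ Q.erase M, 2 * a r M / π M * rvCov μ ψ (f r)
      = 1 / π M * (2 * ∑ r ∈ Q.erase M, a r M * rvCov μ ψ (f r)) := by
    rw [mul_sum, mul_sum]
    exact sum_congr rfl fun r _ => by ring
  rw [hcov]
  ring

/-- Variance decomposition of the adaptive IBM estimating function (scalar version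
of Theorem 3): for centered square-integrable `ψ, f_r`, independent pattern `R`
(product space), and coefficients satisfying the constraint `∑_{s ⊇ r} α_{r,s} = 0`,
`Var(Ψ) = Var(ψ)/π_M + ∑_{r≠M}(2α_{r,M}/π_M)Cov(ψ, f_r)
+ ∑_{s≠M}(1/π_s)Var(∑_{r⊆s, r≠M} α_{r,s} f_r) + (1/π_M)Var(∑_{r≠M} α_{r,M} f_r)`. -/
theorem ibm_adaptive_variance_decomposition
    {Ω : Type*} [MeasurableSpace Ω] (μ : Measure Ω) [IsProbabilityMeasure μ]
    {β : Type*} [DecidableEq β] [MeasurableSpace (Finset β)]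
    [MeasurableSingletonClass (Finset β)]
    (ν : Measure (Finset β)) [IsProbabilityMeasure ν]
    (Q : Finset (Finset β)) (M : Finset β) (hM : M ∈ Q)
    (hQsub : ∀ t ∈ Q, t ⊆ M) (hν : ∀ t, t ∉ Q → ν {t} = 0)
    (π : Finset β → ℝ) (hπ : ∀ t ∈ Q, π t = (ν {t}).toReal)
    (hpos : ∀ t ∈ Q, 0 < π t)
    (ψ : Ω → ℝ) (hψ2 : MemLp ψ 2 μ) (hψ0 : ∫ z, ψ z ∂μ = 0)
    (f : Finset β → Ω → ℝ) (hf2 : ∀ r ∈ Q.erase M, MemLp (f r) 2 μ)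
    (hf0 : ∀ r ∈ Q.erase M, ∫ z, f r z ∂μ = 0)
    (a : Finset β → Finset β → ℝ)
    (ha : ∀ r ∈ Q.erase M, ∑ s ∈ Q.filter (fun s => r ⊆ s), a r s = 0) :
    rvVar (μ.prod ν)
      (fun p =>
        (if p.2 = M then 1 / π M else 0) * ψ p.1 +
        ∑ r ∈ Q.erase M,
          (∑ s ∈ Q.filter (fun s => r ⊆ s),
            (if p.2 = s then 1 / π s else 0) * a r s) * f r p.1)
      = rvVar μ ψ / π M
        + ∑ r ∈ Q.erase M, (2 * a r M / π M) * rvCov μ ψ (f r)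
        + ∑ s ∈ Q.erase M, (1 / π s) *
            rvVar μ (fun x => ∑ r ∈ (Q.erase M).filter (fun r => r ⊆ s), a r s * f r x)
        + (1 / π M) * rvVar μ (fun x => ∑ r ∈ Q.erase M, a r M * f r x) :=
  ibm_adaptive_variance_decomposition_general μ ν Q M hM hQsub π hπ ψ hψ2 hψ0 f hf2 hf0 a
end
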